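/- Let G be a finite group, let g, h ∈ G, and let k be a positive integer. Let u = b_k(h̃,g) = h^k + h̃·g·(1-h) be a Bovdi unit and v = b(h̃,g) = 1 + h̃·g·(1-h) the corresponding bicyclic unit in ℤG. Then the subgroup ⟨u, v^{-1}·u·v⟩ of the unit group U(ℤG) is abelian-by-finite (it has an abelian normal subgroup of finite index) and solvable of derived length at most 2. -/

import Mathlib

/-- `h̃ = ∑_{x ∈ ⟨h⟩} x` in the group ring `R G`, written as `∑_{i < o(h)} h^i`. -/
noncomputable def grpTilde (R : Type*) [CommRing R] {G : Type*} [Group G] (h : G) :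
    MonoidAlgebra R G :=
  ∑ i ∈ Finset.range (orderOf h), MonoidAlgebra.of R G (h ^ i)

/-- Bovdi unit `b_k(g, h̃) = h^k + (1 - h)·g·h̃`. -/
noncomputable def bovdiL (R : Type*) [CommRing R] {G : Type*} [Group G] (g h : G) (k : ℕ) :
    MonoidAlgebra R G :=
  MonoidAlgebra.of R G (h ^ k) +
    (1 - MonoidAlgebra.of R G h) * MonoidAlgebra.of R G g * grpTilde R h

/-- Bovdi unit `b_k(h̃, g) = h^k + h̃·g·(1 - h)`. -/
noncomputable def bovdiR (R : Type*) [CommRing R] {G : Type*} [Group G] (g h : G) (k : ℕ) :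
    MonoidAlgebra R G :=
  MonoidAlgebra.of R G (h ^ k) +
    grpTilde R h * MonoidAlgebra.of R G g * (1 - MonoidAlgebra.of R G h)

/-!
Let `J = grpTildeNil R h = {a ∈ h̃·R[G] | a·h̃ = 0}`. Since `(1 - h)·h̃ = 0`, `J` contains
`a₀ = h̃·g·(1 - h)`; since `t·h̃ = h̃` for `t ∈ ⟨h⟩`, every `a ∈ J` satisfies `t·a = a`, `a·t ∈ J`,
`h̃·a = o(h)·a`, and any two elements of `J` multiply to zero. Hence the units of the form `t + a`
with `t ∈ ⟨h⟩`, `a ∈ J` form a group `K = grpTildeUnits R h` containing `u = h^k + a₀` and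
`v = 1 + a₀`. Multiplying `t + a = t' + a'` by `h̃` gives `o(h)·(a - a') = 0`, so over a
torsion-free ring `t` is determined by the unit and `t + a ↦ t` is a homomorphism `K → ⟨h⟩`. Its
kernel `1 + J` is abelian because `J·J = 0`, so `K` and all its subgroups are
abelian-by-(finite cyclic), in particular metabelian.
-/

open MonoidAlgebra Subgroup

section GrpTilde

variable {R G : Type*} [CommRing R] [Group G] (h : G)

theorem of_mul_grpTilde : of R G h * grpTilde R h = grpTilde R h := by
  have hsum := Finset.sum_range_succ' (fun i => of R G (h ^ i)) (orderOf h)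
  rw [Finset.sum_range_succ, pow_orderOf_eq_one, pow_zero] at hsum
  rw [grpTilde, Finset.mul_sum]
  simp only [← map_mul, ← pow_succ']
  exact (add_right_cancel hsum).symm

theorem of_zpow_mul_grpTilde (j : ℤ) : of R G (h ^ j) * grpTilde R h = grpTilde R h := by
  induction j using Int.induction_on with
  | zero => rw [zpow_zero, map_one, one_mul]
  | succ j ih => rw [zpow_add_one, map_mul, mul_assoc, of_mul_grpTilde, ih]
  | pred j ih =>
    have hinv : of R G h⁻¹ * grpTilde R h = grpTilde R h := by
      conv_lhs => rw [← of_mul_grpTilde h, ← mul_assoc, ← map_mul, inv_mul_cancel, map_one, one_mul]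
    rw [zpow_sub_one, map_mul, mul_assoc, hinv, ih]

theorem of_mul_grpTilde_of_mem_zpowers {t : G} (ht : t ∈ zpowers h) :
    of R G t * grpTilde R h = grpTilde R h := by
  obtain ⟨j, rfl⟩ := mem_zpowers_iff.mp ht
  exact of_zpow_mul_grpTilde h j

theorem grpTilde_mul_of_of_mem_zpowers {t : G} (ht : t ∈ zpowers h) :
    grpTilde R h * of R G t = grpTilde R h := by
  obtain ⟨j, rfl⟩ := mem_zpowers_iff.mp ht
  have hcomm : Commute (of R G (h ^ j)) (grpTilde R h) :=
    Commute.sum_right _ _ _ fun i _ => (((Commute.refl h).zpow_left j).pow_right i).map (of R G)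
  rw [← hcomm.eq, of_mul_grpTilde_of_mem_zpowers h ht]

theorem grpTilde_mul_grpTilde : grpTilde R h * grpTilde R h = orderOf h • grpTilde R h := by
  nth_rw 1 [grpTilde]
  rw [Finset.sum_mul, Finset.sum_congr rfl fun i _ =>
    of_mul_grpTilde_of_mem_zpowers h (npow_mem_zpowers h i), Finset.sum_const, Finset.card_range]

end GrpTilde

section GrpTildeNil

variable {R G : Type*} [CommRing R] [Group G]

variable (R) in
noncomputable def grpTildeNil (h : G) :
    AddSubgroup (MonoidAlgebra R G) :=
  (AddMonoidHom.mulLeft (grpTilde R h)).range ⊓ (AddMonoidHom.mulRight (grpTilde R h)).ker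

variable {h : G} {a b x y : MonoidAlgebra R G} {s t : G}

theorem mem_grpTildeNil :
    a ∈ grpTildeNil R h ↔ (∃ c, grpTilde R h * c = a) ∧ a * grpTilde R h = 0 := by
  simp [grpTildeNil]

theorem grpTilde_mul_mul_one_sub_mem_grpTildeNil (x : MonoidAlgebra R G) :
    grpTilde R h * x * (1 - of R G h) ∈ grpTildeNil R h := by
  refine mem_grpTildeNil.mpr ⟨⟨x * (1 - of R G h), (mul_assoc _ _ _).symm⟩, ?_⟩
  rw [mul_assoc, sub_mul, one_mul, of_mul_grpTilde, sub_self, mul_zero]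

theorem mul_eq_zero_of_mem_grpTildeNil (ha : a ∈ grpTildeNil R h) (hb : b ∈ grpTildeNil R h) :
    a * b = 0 := by
  obtain ⟨⟨c, rfl⟩, -⟩ := mem_grpTildeNil.mp hb
  rw [← mul_assoc, (mem_grpTildeNil.mp ha).2, zero_mul]

theorem of_mul_eq_self_of_mem_grpTildeNil (ht : t ∈ zpowers h) (ha : a ∈ grpTildeNil R h) :
    of R G t * a = a := by
  obtain ⟨⟨c, rfl⟩, -⟩ := mem_grpTildeNil.mp ha
  rw [← mul_assoc, of_mul_grpTilde_of_mem_zpowers h ht]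

theorem mul_of_mem_grpTildeNil (ht : t ∈ zpowers h) (ha : a ∈ grpTildeNil R h) :
    a * of R G t ∈ grpTildeNil R h := by
  obtain ⟨⟨c, rfl⟩, hc⟩ := mem_grpTildeNil.mp ha
  refine mem_grpTildeNil.mpr ⟨⟨c * of R G t, (mul_assoc _ _ _).symm⟩, ?_⟩
  rw [mul_assoc, of_mul_grpTilde_of_mem_zpowers h ht, hc]

theorem grpTilde_mul_of_mem_grpTildeNil (ha : a ∈ grpTildeNil R h) :
    grpTilde R h * a = orderOf h • a := by
  obtain ⟨⟨c, rfl⟩, -⟩ := mem_grpTildeNil.mp ha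
  rw [← mul_assoc, grpTilde_mul_grpTilde, smul_mul_assoc]

theorem mul_sub_of_mul_mem_grpTildeNil (hs : s ∈ zpowers h) (ht : t ∈ zpowers h)
    (hx : x - of R G s ∈ grpTildeNil R h) (hy : y - of R G t ∈ grpTildeNil R h) :
    x * y - of R G (s * t) ∈ grpTildeNil R h := by
  have hxy : x * y - of R G (s * t) =
      (x - of R G s) * of R G t + of R G s * (y - of R G t) + (x - of R G s) * (y - of R G t) := by
    rw [map_mul]; noncomm_ring
  rw [hxy, mul_eq_zero_of_mem_grpTildeNil hx hy, add_zero, of_mul_eq_self_of_mem_grpTildeNil hs hy]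
  exact add_mem (mul_of_mem_grpTildeNil ht hx) hy

theorem val_inv_sub_of_inv_mem_grpTildeNil {w : (MonoidAlgebra R G)ˣ} (ht : t ∈ zpowers h)
    (hw : ↑w - of R G t ∈ grpTildeNil R h) :
    ↑w⁻¹ - of R G t⁻¹ ∈ grpTildeNil R h := by
  set a := ↑w - of R G t
  have hinv : (w : MonoidAlgebra R G) * (of R G t⁻¹ - a * of R G t⁻¹) = 1 := by
    have hw' : (w : MonoidAlgebra R G) = of R G t + a := (add_sub_cancel _ _).symm
    rw [hw', add_mul, mul_sub, mul_sub, ← map_mul, mul_inv_cancel, map_one, ← mul_assoc,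
      of_mul_eq_self_of_mem_grpTildeNil ht hw, ← mul_assoc, mul_eq_zero_of_mem_grpTildeNil hw hw,
      zero_mul]
    abel
  rw [Units.inv_eq_of_mul_eq_one_right hinv, sub_sub_cancel_left]
  exact neg_mem (mul_of_mem_grpTildeNil (inv_mem ht) hw)

theorem commute_of_sub_one_mem_grpTildeNil (hx : x - 1 ∈ grpTildeNil R h)
    (hy : y - 1 ∈ grpTildeNil R h) : Commute x y := by
  have hsq (a b : MonoidAlgebra R G) : (1 + a) * (1 + b) = 1 + a + b + a * b := by noncomm_ring
  rw [← add_sub_cancel 1 x, ← add_sub_cancel 1 y, Commute, SemiconjBy, hsq, hsq,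
    mul_eq_zero_of_mem_grpTildeNil hx hy, mul_eq_zero_of_mem_grpTildeNil hy hx]
  abel

theorem eq_of_of_sub_of_mem_grpTildeNil [Nontrivial R] [IsAddTorsionFree R]
    (hh : IsOfFinOrder h) (hs : s ∈ zpowers h) (ht : t ∈ zpowers h)
    (hst : of R G s - of R G t ∈ grpTildeNil R h) : s = t := by
  have : IsAddTorsionFree (MonoidAlgebra R G) :=
    Module.isTorsionFree_nat_iff_isAddTorsionFree.mp inferInstance
  have hzero : orderOf h • (of R G s - of R G t) = orderOf h • 0 := by
    rw [← grpTilde_mul_of_mem_grpTildeNil hst, mul_sub, grpTilde_mul_of_of_mem_zpowers h hs,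
      grpTilde_mul_of_of_mem_zpowers h ht, sub_self, smul_zero]
  exact of_injective (sub_eq_zero.mp (nsmul_right_injective hh.orderOf_pos.ne' hzero))

end GrpTildeNil

section GrpTildeUnits

variable {R G : Type*} [CommRing R] [Group G]

variable (R) in
def grpTildeUnits (h : G) :
    Subgroup (MonoidAlgebra R G)ˣ where
  carrier := {w | ∃ t ∈ zpowers h, ↑w - of R G t ∈ grpTildeNil R h}
  one_mem' := ⟨1, one_mem _, by rw [Units.val_one, map_one, sub_self]; exact zero_mem _⟩
  mul_mem' := by
    rintro w₁ w₂ ⟨s, hs, hw₁⟩ ⟨t, ht, hw₂⟩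
    exact ⟨s * t, mul_mem hs ht, mul_sub_of_mul_mem_grpTildeNil hs ht hw₁ hw₂⟩
  inv_mem' := by
    rintro w ⟨t, ht, hw⟩
    exact ⟨t⁻¹, inv_mem ht, val_inv_sub_of_inv_mem_grpTildeNil ht hw⟩

namespace grpTildeUnits

variable {h : G}

/-- A choice of `t` with `w - t ∈ grpTildeNil R h`; it is unique by `zpowersPart_eq`. -/
noncomputable def zpowersPart (w : grpTildeUnits R h) : zpowers h :=
  ⟨w.2.choose, w.2.choose_spec.1⟩

theorem val_sub_of_zpowersPart_mem (w : grpTildeUnits R h) :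
    ((w : (MonoidAlgebra R G)ˣ) : MonoidAlgebra R G) - of R G (zpowersPart w) ∈ grpTildeNil R h :=
  w.2.choose_spec.2

variable [Nontrivial R] [IsAddTorsionFree R]

theorem zpowersPart_eq (hh : IsOfFinOrder h) {w : grpTildeUnits R h} {t : G} (ht : t ∈ zpowers h)
    (hw : ((w : (MonoidAlgebra R G)ˣ) : MonoidAlgebra R G) - of R G t ∈ grpTildeNil R h) :
    (zpowersPart w : G) = t := by
  refine eq_of_of_sub_of_mem_grpTildeNil (R := R) hh (zpowersPart w).2 ht ?_
  simpa only [sub_sub_sub_cancel_left] using sub_mem hw (val_sub_of_zpowersPart_mem w)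

noncomputable def toZpowers (hh : IsOfFinOrder h) : grpTildeUnits R h →* zpowers h :=
  MonoidHom.mk' zpowersPart fun w₁ w₂ => Subtype.ext <| zpowersPart_eq hh
    (mul_mem (zpowersPart w₁).2 (zpowersPart w₂).2)
    (mul_sub_of_mul_mem_grpTildeNil (zpowersPart w₁).2 (zpowersPart w₂).2
      (val_sub_of_zpowersPart_mem w₁) (val_sub_of_zpowersPart_mem w₂))

theorem val_sub_one_mem_of_mem_ker (hh : IsOfFinOrder h) {w : grpTildeUnits R h}
    (hw : w ∈ (toZpowers hh).ker) :
    ((w : (MonoidAlgebra R G)ˣ) : MonoidAlgebra R G) - 1 ∈ grpTildeNil R h := by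
  have hw1 : (zpowersPart w : G) = 1 := congrArg Subtype.val hw
  simpa only [hw1, map_one] using val_sub_of_zpowersPart_mem w

instance isMulCommutative_ker_toZpowers (hh : IsOfFinOrder h) :
    IsMulCommutative (toZpowers (R := R) hh).ker :=
  ⟨⟨fun x y => Subtype.ext <| Subtype.ext <| Units.ext <|
    commute_of_sub_one_mem_grpTildeNil (val_sub_one_mem_of_mem_ker hh x.2)
      (val_sub_one_mem_of_mem_ker hh y.2)⟩⟩

end grpTildeUnits

end GrpTildeUnits

theorem derivedSeries_two_eq_bot_of_isMulCommutative_ker {H A : Type*} [Group H] [Group A]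
    [IsMulCommutative A] (φ : H →* A) [IsMulCommutative φ.ker] : derivedSeries H 2 = ⊥ := by
  have hle : derivedSeries H 1 ≤ φ.ker := by
    rw [← Subgroup.map_eq_bot_iff, ← le_bot_iff]
    calc (derivedSeries H 1).map φ ≤ derivedSeries A 1 := map_derivedSeries_le_derivedSeries φ 1
      _ = ⊥ := by rw [derivedSeries_one, commutator_eq_bot]
  rw [← le_bot_iff, derivedSeries_succ, ← commutator_self_eq_bot_iff.mpr ‹_›]
  exact commutator_mono hle hle

theorem stmt_9_general {G : Type*} [Group G] [Fintype G] (g h : G) (k : ℕ)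
    (u v : (MonoidAlgebra ℤ G)ˣ)
    (hu : (↑u : MonoidAlgebra ℤ G) = bovdiR ℤ g h k)
    (hv : (↑v : MonoidAlgebra ℤ G) =
      1 + grpTilde ℤ h * MonoidAlgebra.of ℤ G g * (1 - MonoidAlgebra.of ℤ G h)) :
    (∃ N : Subgroup ↥(Subgroup.closure {u, v⁻¹ * u * v} : Subgroup (MonoidAlgebra ℤ G)ˣ),
        N.Normal ∧ IsMulCommutative N ∧ N.FiniteIndex) ∧
      derivedSeries ↥(Subgroup.closure {u, v⁻¹ * u * v} : Subgroup (MonoidAlgebra ℤ G)ˣ) 2 =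
        ⊥ := by
  have hu' : u ∈ grpTildeUnits ℤ h :=
    ⟨h ^ k, npow_mem_zpowers h k, by
      rw [hu, bovdiR, add_sub_cancel_left]; exact grpTilde_mul_mul_one_sub_mem_grpTildeNil _⟩
  have hv' : v ∈ grpTildeUnits ℤ h :=
    ⟨1, one_mem _, by
      rw [hv, map_one, add_sub_cancel_left]; exact grpTilde_mul_mul_one_sub_mem_grpTildeNil _⟩
  have hle : closure {u, v⁻¹ * u * v} ≤ grpTildeUnits ℤ h := by
    rw [closure_le, Set.insert_subset_iff, Set.singleton_subset_iff]
    exact ⟨hu', mul_mem (mul_mem (inv_mem hv') hu') hv'⟩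
  let φ := (grpTildeUnits.toZpowers (isOfFinOrder_of_finite h)).comp (inclusion hle)
  have hker : IsMulCommutative φ.ker := by
    rw [← MonoidHom.comap_ker]
    exact comap_injective_isMulCommutative _ (inclusion_injective hle)
  exact ⟨⟨φ.ker, inferInstance, hker, inferInstance⟩,
    derivedSeries_two_eq_bot_of_isMulCommutative_ker φ⟩

/-- Proposition 3.2 (second part): for the Bovdi unit `u = b_k(h̃,g)` and the bicyclic unit
`v = b(h̃,g) = 1 + h̃·g·(1-h)`, the subgroup `⟨u, u^v⟩` of `U(ℤG)` is abelian-by-finite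
and solvable of derived length at most `2`. -/
theorem stmt_9 {G : Type*} [Group G] [Fintype G] (g h : G) (k : ℕ) (hk : 0 < k)
    (u v : (MonoidAlgebra ℤ G)ˣ)
    (hu : (↑u : MonoidAlgebra ℤ G) = bovdiR ℤ g h k)
    (hv : (↑v : MonoidAlgebra ℤ G) =
      1 + grpTilde ℤ h * MonoidAlgebra.of ℤ G g * (1 - MonoidAlgebra.of ℤ G h)) :
    (∃ N : Subgroup ↥(Subgroup.closure {u, v⁻¹ * u * v} : Subgroup (MonoidAlgebra ℤ G)ˣ),
        N.Normal ∧ IsMulCommutative N ∧ N.FiniteIndex) ∧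
      derivedSeries ↥(Subgroup.closure {u, v⁻¹ * u * v} : Subgroup (MonoidAlgebra ℤ G)ˣ) 2 =
        ⊥ :=
  stmt_9_general g h k u v hu hv
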